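/- If a formal power series y ∈ ℂ[[x]] with y(0) = 0 satisfies x·y'·(1 - r·y) = r·y (equivalently y'/y - r·y' = r/x after clearing denominators), and the coefficient of x^d in y vanishes for 1 ≤ d < r while the coefficient of x^r equals 1, then x^r = y·e^{-r·y} as formal power series. -/

import Mathlib

open PowerSeries

/-- Formal composition `f ∘ g` of power series, valid when `g` has zero
constant term. -/
noncomputable def psComp (f g : PowerSeries ℂ) : PowerSeries ℂ :=
  PowerSeries.mk fun n =>
    PowerSeries.coeff n (∑ k ∈ Finset.range (n + 1), PowerSeries.coeff k f • g ^ k)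

/-! By the chain rule, `F = y e^{-ry}` has `F' = y' (1 - r y) e^{-ry}`, so the edge-contraction
equation says exactly that `F` solves Euler's equation `x F' = r F`. Comparing coefficients,
`(n - r) F_n = 0`, so `F = F_r x^r`, and `F_r = y_r = 1` because `y` starts in degree `r`. -/

theorem psComp_eq_subst (f : ℂ⟦X⟧) {g : ℂ⟦X⟧} (hg : constantCoeff g = 0) :
    psComp f g = f.subst g := by
  ext n
  have hpow : ∀ k, n < k → coeff n (g ^ k) = 0 := fun k hk =>
    X_pow_dvd_iff.mp (pow_dvd_pow_of_dvd (X_dvd_iff.mpr hg) k) n hk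
  rw [psComp, coeff_mk, coeff_subst' (HasSubst.of_constantCoeff_zero' hg), map_sum,
    finsum_eq_sum_of_support_subset _ (s := Finset.range (n + 1))]
  · simp only [map_smul]
  · intro k hk
    simp only [Function.mem_support, Finset.coe_range, Set.mem_Iio] at hk ⊢
    by_contra! h
    exact hk (by rw [hpow k h, smul_zero])

theorem constantCoeff_psComp (f g : ℂ⟦X⟧) : constantCoeff (psComp f g) = constantCoeff f := by
  rw [← coeff_zero_eq_constantCoeff_apply, psComp, coeff_mk]
  simp

theorem derivative_exp_subst {A : Type*} [CommRing A] [Algebra ℚ A] {u : A⟦X⟧}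
    (hu : HasSubst u) : d⁄dX A ((exp A).subst u) = (exp A).subst u * d⁄dX A u := by
  rw [derivative_subst hu, derivative_exp]

theorem eq_monomial_of_X_mul_derivative_eq {R : Type*} [CommRing R] [IsDomain R] [CharZero R]
    {f : R⟦X⟧} {r : ℕ} (h : X * d⁄dX R f = (r : R⟦X⟧) * f) : f = monomial r (coeff r f) := by
  ext n
  rw [coeff_monomial]
  split_ifs with hn
  · rw [hn]
  have hcoeff : ((n : R) - r) * coeff n f = 0 := by
    have hn' := congrArg (coeff n) h
    rw [← map_natCast (C (R := R)), coeff_C_mul] at hn'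
    cases n with
    | zero => simpa using hn'.symm
    | succ m =>
      rw [coeff_succ_X_mul, coeff_derivative] at hn'
      push_cast
      linear_combination hn'
  refine (mul_eq_zero.mp hcoeff).resolve_left ?_
  exact sub_ne_zero.mpr (Nat.cast_injective.ne hn)

theorem coeff_mul_of_forall_lt_coeff_eq_zero {R : Type*} [CommSemiring R] {f g : R⟦X⟧} {n : ℕ}
    (hf : ∀ d < n, coeff d f = 0) : coeff n (f * g) = coeff n f * constantCoeff g := by
  obtain ⟨h, rfl⟩ := X_pow_dvd_iff.mpr hf
  simp [mul_assoc, coeff_X_pow_mul']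

theorem X_mul_derivative_mul_exp_subst_eq {A : Type*} [CommRing A] [Algebra ℚ A] {y : A⟦X⟧}
    (r : ℕ) (hy : constantCoeff y = 0)
    (hODE : X * d⁄dX A y - (r : A⟦X⟧) * X * y * d⁄dX A y = (r : A⟦X⟧) * y) :
    X * d⁄dX A (y * (exp A).subst (-((r : A⟦X⟧) * y))) =
      (r : A⟦X⟧) * (y * (exp A).subst (-((r : A⟦X⟧) * y))) := by
  have hsubst : HasSubst (-((r : A⟦X⟧) * y)) := HasSubst.of_constantCoeff_zero' (by simp [hy])
  have hdu : d⁄dX A (-((r : A⟦X⟧) * y)) = -((r : A⟦X⟧) * d⁄dX A y) := by simp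
  rw [Derivation.leibniz, derivative_exp_subst hsubst, hdu, smul_eq_mul, smul_eq_mul]
  linear_combination (exp A).subst (-(r * y) : A⟦X⟧) * hODE

theorem r_lambert_from_ECF_general (r : ℕ) (y : PowerSeries ℂ)
    (hy0 : PowerSeries.constantCoeff y = 0)
    (hODE : PowerSeries.X * PowerSeries.derivativeFun y -
        (r : PowerSeries ℂ) * PowerSeries.X * y * PowerSeries.derivativeFun y =
        (r : PowerSeries ℂ) * y)
    (hvanish : ∀ d, 1 ≤ d → d < r → PowerSeries.coeff d y = 0)
    (hr_coeff : PowerSeries.coeff r y = 1) :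
    PowerSeries.X ^ r = y * psComp (PowerSeries.exp ℂ) (-((r : PowerSeries ℂ) * y)) := by
  have hlow : ∀ d < r, coeff d y = 0 := fun d hd => by
    rcases Nat.eq_zero_or_pos d with rfl | hd0
    · simpa using hy0
    · exact hvanish d hd0 hd
  set F := y * psComp (exp ℂ) (-((r : ℂ⟦X⟧) * y)) with hF
  have hcoeff : coeff r F = 1 := by
    rw [coeff_mul_of_forall_lt_coeff_eq_zero hlow, hr_coeff, constantCoeff_psComp,
      constantCoeff_exp, one_mul]
  have hEuler : X * d⁄dX ℂ F = (r : ℂ⟦X⟧) * F := by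
    rw [hF, psComp_eq_subst _ (by simp [hy0])]
    exact X_mul_derivative_mul_exp_subst_eq r hy0 hODE
  rw [eq_monomial_of_X_mul_derivative_eq hEuler, hcoeff, X_pow_eq]

/-- If `y ∈ ℂ[[x]]` with `y(0) = 0` satisfies the (0,1) edge-contraction
equation `x y' - r x y y' = r y`, its coefficients vanish in degrees
`1 ≤ d < r`, and its `x^r`-coefficient is `1`, then `x^r = y e^(-r y)`. -/
theorem r_lambert_from_ECF (r : ℕ) (hr : 0 < r) (y : PowerSeries ℂ)
    (hy0 : PowerSeries.constantCoeff y = 0)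
    (hODE : PowerSeries.X * PowerSeries.derivativeFun y -
        (r : PowerSeries ℂ) * PowerSeries.X * y * PowerSeries.derivativeFun y =
        (r : PowerSeries ℂ) * y)
    (hvanish : ∀ d, 1 ≤ d → d < r → PowerSeries.coeff d y = 0)
    (hr_coeff : PowerSeries.coeff r y = 1) :
    PowerSeries.X ^ r = y * psComp (PowerSeries.exp ℂ) (-((r : PowerSeries ℂ) * y)) :=
  r_lambert_from_ECF_general r y hy0 hODE hvanish hr_coeff
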